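/- If μ = e^{2πiℓ} with ℓ ∈ ℝ satisfies the quadratic equation μ² − μ·T + 1 = 0 with T = 2 cos(√ω L₂) cos(√ω L₁) − (5/2) sin(√ω L₂) sin(√ω L₁) and L₁ + L₂ = 2π, then 9 cos(2π√ω) − cos(2(π − L₂)√ω) − 8 cos(2πℓ) = 0. -/
import Mathlib


open Real

theorem necklace_characteristic_equation (ω ℓ L₁ L₂ : ℝ) (hω : 0 < ω)
    (hL : L₁ + L₂ = 2 * Real.pi)
    (T : ℝ)
    (hT : T = 2 * Real.cos (Real.sqrt ω * L₂) * Real.cos (Real.sqrt ω * L₁)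
      - (5/2) * Real.sin (Real.sqrt ω * L₂) * Real.sin (Real.sqrt ω * L₁))
    (μ : ℂ) (hμ : μ = Complex.exp (2 * Real.pi * Complex.I * (ℓ : ℂ)))
    (hroot : μ ^ 2 - μ * (T : ℂ) + 1 = 0) :
    9 * Real.cos (2 * Real.pi * Real.sqrt ω)
      - Real.cos (2 * (Real.pi - L₂) * Real.sqrt ω)
      - 8 * Real.cos (2 * Real.pi * ℓ) = 0 := by
  have hμne : μ ≠ 0 := by
    rw [hμ]; exact Complex.exp_ne_zero _
  have hTμ : (T : ℂ) = μ + μ⁻¹ := by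
    field_simp
    linear_combination -hroot
  have harg : (2 * Real.pi * Complex.I * (ℓ : ℂ)) = ((2 * Real.pi * ℓ : ℝ) : ℂ) * Complex.I := by
    push_cast; ring
  have hcos : (T : ℂ) = 2 * Complex.cos ((2 * Real.pi * ℓ : ℝ) : ℂ) := by
    rw [hTμ, hμ, harg, ← Complex.exp_neg, Complex.cos]
    ring
  have hTreal : T = 2 * Real.cos (2 * Real.pi * ℓ) := by
    have := hcos
    rw [← Complex.ofReal_cos] at this
    exact_mod_cast this
  have hL1 : L₁ = 2 * Real.pi - L₂ := by linarith
  have h2π : 2 * Real.pi * Real.sqrt ω = Real.sqrt ω * L₂ + Real.sqrt ω * L₁ := by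
    rw [hL1]; ring
  have hdiff : 2 * (Real.pi - L₂) * Real.sqrt ω = Real.sqrt ω * L₁ - Real.sqrt ω * L₂ := by
    rw [hL1]; ring
  rw [h2π, hdiff, Real.cos_add, Real.cos_sub]
  have h8 : 8 * Real.cos (2 * Real.pi * ℓ) = 4 * T := by
    rw [hTreal]; ring
  rw [h8, hT]; ring
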